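/- If x and y are ZFC sets that are ordinals, then x is a proper subset of y (x ⊆ y and x ≠ y) if and only if x ∈ y. -/
import Mathlib

/-- A ZFC set is an ordinal (in the paper's sense) if it is membership transitive
and every member is membership transitive. -/
def ZFSet.IsOrdinal' (x : ZFSet) : Prop :=
  x.IsTransitive ∧ ∀ y ∈ x, ZFSet.IsTransitive y

theorem ZFSet.IsOrdinal'.mem {x y : ZFSet} (hx : x.IsOrdinal') (h : y ∈ x) :
    y.IsOrdinal' :=
  ⟨hx.2 y h, fun z hz => hx.2 z (hx.1 y h hz)⟩

theorem ZFSet.isOrdinal'_trichotomy : ∀ x : ZFSet, x.IsOrdinal' →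
    ∀ y : ZFSet, y.IsOrdinal' → x ∈ y ∨ x = y ∨ y ∈ x := by
  intro x
  induction x using ZFSet.inductionOn 
  case h x IH1 =>
    intro hx y
    induction y using ZFSet.inductionOn 
    case h y IH2 =>
      intro hy
      by_cases hxy : x ∈ y
      · exact Or.inl hxy
      by_cases hyx : y ∈ x
      · exact Or.inr (Or.inr hyx)
      refine Or.inr (Or.inl (ZFSet.ext fun a => ⟨fun ha => ?_, fun ha => ?_⟩))
      · rcases IH1 a ha (hx.mem ha) y hy with h | rfl | h
        · exact h
        · exact absurd ha hyx
        · exact absurd (hx.1 a ha h) hyx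
      · rcases IH2 a ha (hy.mem ha) with h | rfl | h
        · exact absurd (hy.1 a ha h) hxy
        · exact absurd ha hxy
        · exact h

/-- For ordinals, proper inclusion coincides with membership. -/
theorem ZFSet.isOrdinal'_ssubset_iff_mem {x y : ZFSet}
    (hx : x.IsOrdinal') (hy : y.IsOrdinal') :
    (x ⊆ y ∧ x ≠ y) ↔ x ∈ y := by
  constructor
  · rintro ⟨hsub, hne⟩
    rcases ZFSet.isOrdinal'_trichotomy x hx y hy with h | h | h
    · exact h
    · exact absurd h hne
    · exact absurd (hsub h) (ZFSet.mem_irrefl y)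
  · intro h
    refine ⟨hy.1 x h, fun hrfl => ?_⟩
    subst hrfl
    exact ZFSet.mem_irrefl x h
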